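/- The extreme Kerr throat data achieve equality in the mass functional bound: with σ₀ = ln(4|J|) - ln(1+cos²θ) and ω₀ = -8J cos θ/(1+cos²θ), the functional M(σ,ω) = (1/2π) ∫_{S²} ((σ')² + 4σ + (ω')²/η²) dS₀ (with η = e^σ sin²θ and dS₀ the round area element sin θ dθ dφ) satisfies M(σ₀, ω₀) = 8 ln(2|J|) + 8, i.e. 2|J| = e^{(M(σ₀,ω₀)-8)/8}. -/

import Mathlib

/-!
Along the extreme Kerr throat the twist term `(ω₀')² / η²` equals `4 sin²θ / (1 + cos²θ)²`, and
together with `(σ₀')² = 4 cos²θ sin²θ / (1 + cos²θ)²` it collapses to `4 sin²θ / (1 + cos²θ)`.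
The resulting integrand has the explicit primitive `-4 cos θ (1 + σ₀(θ))`, so the integral over
`[0, π]` is `8 (1 + σ₀(0)) = 8 (1 + ln (4|J|) - ln 2) = 8 ln (2|J|) + 8`.
-/

open Real

namespace KerrThroat

lemma one_add_cos_sq_pos (θ : ℝ) : 0 < 1 + cos θ ^ 2 := by positivity

lemma hasDerivAt_one_add_cos_sq (θ : ℝ) :
    HasDerivAt (fun t => 1 + cos t ^ 2) (-(2 * cos θ * sin θ)) θ := by
  refine (((hasDerivAt_cos θ).pow 2).const_add 1).congr_deriv ?_
  ring

lemma hasDerivAt_const_sub_log_one_add_cos_sq (c θ : ℝ) :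
    HasDerivAt (fun t => c - log (1 + cos t ^ 2))
      (2 * cos θ * sin θ / (1 + cos θ ^ 2)) θ := by
  have hlog := (hasDerivAt_one_add_cos_sq θ).log (one_add_cos_sq_pos θ).ne'
  refine (hlog.const_sub c).congr_deriv ?_
  ring

lemma hasDerivAt_cos_div_one_add_cos_sq (a θ : ℝ) :
    HasDerivAt (fun t => -(a * cos t) / (1 + cos t ^ 2))
      (a * sin θ ^ 3 / (1 + cos θ ^ 2) ^ 2) θ := by
  have hnum : HasDerivAt (fun t => -(a * cos t)) (a * sin θ) θ :=
    ((hasDerivAt_cos θ).const_mul a).neg.congr_deriv (by ring)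
  refine (hnum.div (hasDerivAt_one_add_cos_sq θ) (one_add_cos_sq_pos θ).ne').congr_deriv ?_
  have := one_add_cos_sq_pos θ
  field_simp
  linear_combination -a * sin θ * Real.sin_sq θ

lemma exp_sub_log_one_add_cos_sq (c θ : ℝ) :
    exp (c - log (1 + cos θ ^ 2)) = exp c / (1 + cos θ ^ 2) := by
  rw [exp_sub, exp_log (one_add_cos_sq_pos θ)]

noncomputable def density (c θ : ℝ) : ℝ :=
  (4 * sin θ ^ 2 / (1 + cos θ ^ 2) + 4 * (c - log (1 + cos θ ^ 2))) * sin θ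

lemma hasDerivAt_density_primitive (c θ : ℝ) :
    HasDerivAt (fun t => -4 * cos t * (1 + c - log (1 + cos t ^ 2))) (density c θ) θ := by
  refine (((hasDerivAt_cos θ).const_mul (-4)).mul
    (hasDerivAt_const_sub_log_one_add_cos_sq (1 + c) θ)).congr_deriv ?_
  have := one_add_cos_sq_pos θ
  unfold density
  field_simp
  linear_combination -sin θ * Real.sin_sq θ

lemma continuous_density (c : ℝ) : Continuous (density c) := by
  have h : ∀ θ : ℝ, 1 + cos θ ^ 2 ≠ 0 := fun θ => (one_add_cos_sq_pos θ).ne'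
  unfold density
  fun_prop (disch := exact h _)

lemma integral_density (c : ℝ) : ∫ θ in (0)..π, density c θ = 8 * (1 + c - log 2) := by
  rw [intervalIntegral.integral_eq_sub_of_hasDerivAt
    (fun θ _ => hasDerivAt_density_primitive c θ) ((continuous_density c).intervalIntegrable 0 π)]
  norm_num
  ring

lemma integrand_eq_density (J θ : ℝ) (hJ : J ≠ 0) :
    ((deriv (fun t => log (4 * |J|) - log (1 + cos t ^ 2)) θ) ^ 2
        + 4 * (log (4 * |J|) - log (1 + cos θ ^ 2))
        + (deriv (fun t => -(8 * J * cos t) / (1 + cos t ^ 2)) θ) ^ 2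
          / (exp (log (4 * |J|) - log (1 + cos θ ^ 2)) * sin θ ^ 2) ^ 2) * sin θ
      = density (log (4 * |J|)) θ := by
  rcases eq_or_ne (sin θ) 0 with hs | hs
  · simp [density, hs]
  rw [(hasDerivAt_const_sub_log_one_add_cos_sq _ θ).deriv,
    (hasDerivAt_cos_div_one_add_cos_sq _ θ).deriv, exp_sub_log_one_add_cos_sq,
    exp_log (by positivity), density]
  have := one_add_cos_sq_pos θ
  have hJ' : |J| ≠ 0 := abs_ne_zero.mpr hJ
  field_simp
  linear_combination -64 * sin θ ^ 2 * sq_abs J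

end KerrThroat

open KerrThroat in
/-- the extreme Kerr throat data achieve equality in the mass
functional bound: `M(σ₀, ω₀) = 8 ln(2|J|) + 8`, i.e.
`2|J| = e^{(M(σ₀,ω₀)-8)/8}`. -/
theorem stmt_13 (J : ℝ) (hJ : J ≠ 0)
    (σ₀ ω₀ η : ℝ → ℝ)
    (hσ₀ : σ₀ = fun θ => Real.log (4 * |J|) - Real.log (1 + Real.cos θ ^ 2))
    (hω₀ : ω₀ = fun θ => -(8 * J * Real.cos θ) / (1 + Real.cos θ ^ 2))
    (hη : η = fun θ => Real.exp (σ₀ θ) * Real.sin θ ^ 2)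
    (M : ℝ)
    (hM : M = ∫ θ in (0)..π,
      ((deriv σ₀ θ) ^ 2 + 4 * σ₀ θ + (deriv ω₀ θ) ^ 2 / (η θ) ^ 2) *
        Real.sin θ) :
    M = 8 * Real.log (2 * |J|) + 8 ∧ 2 * |J| = Real.exp ((M - 8) / 8) := by
  subst hσ₀ hω₀ hη
  have hJ2 : 0 < 2 * |J| := by positivity
  have hlog : log (4 * |J|) = log 2 + log (2 * |J|) := by
    rw [← log_mul two_ne_zero hJ2.ne']
    ring_nf
  have hM' : M = 8 * log (2 * |J|) + 8 := by
    rw [hM, intervalIntegral.integral_congr (fun θ _ => integrand_eq_density J θ hJ),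
      integral_density, hlog]
    ring
  refine ⟨hM', ?_⟩
  rw [hM', show (8 * log (2 * |J|) + 8 - 8) / 8 = log (2 * |J|) by ring, exp_log hJ2]
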